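/- arXiv:1305.3239 — 6 statements merged into one kernel-verified Lean document; each statement's English description precedes it below -/
import Mathlib

section
/- If Q is a self-inversive polynomial of degree m (i.e., z^m * conj(Q(1/conj(z))) = Q(z)) with real coefficients, then writing e^{-imθ/2} Q(e^{iθ}) = B⁰(x) + √(1-x²) B¹(x) with x = cos(θ/2), the function B¹ is identically zero. -/
open Polynomial Real Complex

/-- If `Q` is self-inversive of degree `m` with real coefficients, then in the
decomposition `e^{-imθ/2} Q(e^{iθ}) = B⁰(x) + √(1-x²) B¹(x)`, `x = cos(θ/2)`, the
polynomial `B¹` is identically zero. -/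
theorem stmt_0 (m : ℕ) (Q : Polynomial ℂ) (hdeg : Q.degree ≤ (m : ℕ))
    (hSI : ∀ z : ℂ, z ≠ 0 → z ^ m * (starRingEnd ℂ) (Q.eval (1 / (starRingEnd ℂ) z)) = Q.eval z)
    (hreal : ∀ j : ℕ, (Q.coeff j).im = 0)
    (B0 B1 : Polynomial ℝ) (hB0 : B0.degree ≤ (m : ℕ)) (hB1 : B1.degree < (m : ℕ))
    (hdecomp : ∀ θ ∈ Set.Icc (0 : ℝ) (2 * π),
      Complex.exp (-Complex.I * m * θ / 2) * Q.eval (Complex.exp (Complex.I * θ)) =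
        ((B0.eval (Real.cos (θ / 2)) +
          Real.sqrt (1 - Real.cos (θ / 2) ^ 2) * B1.eval (Real.cos (θ / 2)) : ℝ) : ℂ)) :
    B1 = 0 := by
  -- conjugation commutes with evaluation, since `Q` has real coefficients
  have hQmap : Q.map (starRingEnd ℂ) = Q := by
    ext j
    simp only [Polynomial.coeff_map]
    exact Complex.conj_eq_iff_im.mpr (hreal j)
  have hQc : ∀ z : ℂ, (starRingEnd ℂ) (Q.eval z) = Q.eval ((starRingEnd ℂ) z) := by
    intro z
    conv_rhs => rw [← hQmap]
    rw [Polynomial.eval_map, Polynomial.eval₂_at_apply]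
  -- the "complexified" decomposition function
  set B0' : Polynomial ℂ := B0.map (algebraMap ℝ ℂ) with hB0'
  set B1' : Polynomial ℂ := B1.map (algebraMap ℝ ℂ) with hB1'
  set F : ℂ → ℂ := fun z =>
    Complex.exp (-Complex.I * m * z / 2) * Q.eval (Complex.exp (Complex.I * z)) -
      (B0'.eval (Complex.cos (z / 2)) +
        Complex.sin (z / 2) * B1'.eval (Complex.cos (z / 2))) with hF
  have hFdiff : Differentiable ℂ F := by
    apply Differentiable.sub
    · apply Differentiable.mul
      · exact Complex.differentiable_exp.comp (by fun_prop)
      · exact Q.differentiable.comp (Complex.differentiable_exp.comp (by fun_prop))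
    · apply Differentiable.add
      · exact B0'.differentiable.comp (Complex.differentiable_cos.comp (by fun_prop))
      · exact (Complex.differentiable_sin.comp (by fun_prop)).mul
          (B1'.differentiable.comp (Complex.differentiable_cos.comp (by fun_prop)))
  -- the real restriction
  set g : ℝ → ℂ := fun θ => F ((θ : ℝ) : ℂ) with hg
  have hganal : AnalyticOnNhd ℝ g Set.univ := by
    intro x _
    exact ((hFdiff.analyticAt _).restrictScalars).comp (Complex.ofRealCLM.analyticAt x)
  -- identify `g θ` with a real formula
  have heval0 : ∀ x : ℝ, B0'.eval ((x : ℝ) : ℂ) = ((B0.eval x : ℝ) : ℂ) := by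
    intro x
    rw [hB0', Polynomial.eval_map]
    exact Polynomial.eval₂_at_apply (algebraMap ℝ ℂ) x
  have heval1 : ∀ x : ℝ, B1'.eval ((x : ℝ) : ℂ) = ((B1.eval x : ℝ) : ℂ) := by
    intro x
    rw [hB1', Polynomial.eval_map]
    exact Polynomial.eval₂_at_apply (algebraMap ℝ ℂ) x
  have hgeval : ∀ θ : ℝ, g θ =
      Complex.exp (-Complex.I * m * θ / 2) * Q.eval (Complex.exp (Complex.I * θ)) -
        ((B0.eval (Real.cos (θ / 2)) + Real.sin (θ / 2) * B1.eval (Real.cos (θ / 2)) : ℝ) : ℂ) := by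
    intro θ
    have h2 : ((θ : ℂ)) / 2 = ((θ / 2 : ℝ) : ℂ) := by push_cast; ring
    simp only [hg, hF, h2, ← Complex.ofReal_cos, ← Complex.ofReal_sin, heval0, heval1]
    push_cast
    ring
  -- `g` vanishes on `[0, 2π]`
  have hgzero : ∀ θ ∈ Set.Icc (0 : ℝ) (2 * π), g θ = 0 := by
    intro θ hθ
    have hs : Real.sqrt (1 - Real.cos (θ / 2) ^ 2) = Real.sin (θ / 2) := by
      rw [← Real.sin_sq]
      exact Real.sqrt_sq (Real.sin_nonneg_of_nonneg_of_le_pi (by linarith [hθ.1])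
        (by linarith [hθ.2]))
    rw [hgeval θ, sub_eq_zero, hdecomp θ hθ, hs]
  -- identity theorem: `g` vanishes everywhere
  have hgall : ∀ θ : ℝ, g θ = 0 := by
    have hpi : (0:ℝ) < π := Real.pi_pos
    have hev : g =ᶠ[nhds π] 0 := by
      filter_upwards [Ioo_mem_nhds (by linarith : (0:ℝ) < π) (by linarith : π < 2 * π)] with θ hθ
      exact hgzero θ ⟨hθ.1.le, hθ.2.le⟩
    have := hganal.eqOn_zero_of_preconnected_of_eventuallyEq_zero
      isPreconnected_univ (Set.mem_univ π) hev
    intro θ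
    exact this (Set.mem_univ θ)
  -- evenness: `e^{-imθ/2} Q(e^{iθ})` is invariant under `θ ↦ -θ`
  have heven : ∀ θ : ℝ,
      Complex.exp (-Complex.I * m * (-θ) / 2) * Q.eval (Complex.exp (Complex.I * (-θ))) =
      Complex.exp (-Complex.I * m * θ / 2) * Q.eval (Complex.exp (Complex.I * θ)) := by
    intro θ
    have hz : (Complex.exp (Complex.I * θ)) ≠ 0 := Complex.exp_ne_zero _
    have h1 := hSI _ hz
    have hconj : (starRingEnd ℂ) (Complex.exp (Complex.I * θ)) =
        Complex.exp (Complex.I * (-θ)) := by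
      rw [← Complex.exp_conj]
      congr 1
      rw [map_mul, Complex.conj_I, Complex.conj_ofReal]
      push_cast
      ring
    have hinv : 1 / (starRingEnd ℂ) (Complex.exp (Complex.I * θ)) =
        Complex.exp (Complex.I * θ) := by
      rw [hconj, one_div, ← Complex.exp_neg]
      congr 1
      ring
    rw [hinv, hQc, hconj] at h1
    -- h1 : exp(Iθ)^m * Q.eval (exp (I * (-θ))) = Q.eval (exp (I*θ))
    have hpow : (Complex.exp (Complex.I * θ)) ^ m = Complex.exp (m * (Complex.I * θ)) :=
      (Complex.exp_nat_mul _ m).symm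
    calc Complex.exp (-Complex.I * m * (-θ) / 2) * Q.eval (Complex.exp (Complex.I * (-θ)))
        = Complex.exp (-Complex.I * m * θ / 2) *
            ((Complex.exp (Complex.I * θ)) ^ m * Q.eval (Complex.exp (Complex.I * (-θ)))) := by
          rw [hpow, ← mul_assoc, ← Complex.exp_add]
          congr 2
          push_cast
          ring
      _ = Complex.exp (-Complex.I * m * θ / 2) * Q.eval (Complex.exp (Complex.I * θ)) := by
          rw [h1]
  -- conclude: `B1` vanishes on `(-1, 1)`
  have hroot : ∀ x ∈ Set.Ioo (-1 : ℝ) 1, B1.eval x = 0 := by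
    intro x hx
    set θ : ℝ := 2 * Real.arccos x with hθdef
    have hcos : Real.cos (θ / 2) = x := by
      rw [hθdef]
      rw [show 2 * Real.arccos x / 2 = Real.arccos x by ring]
      exact Real.cos_arccos hx.1.le hx.2.le
    have hsin : Real.sin (θ / 2) = Real.sqrt (1 - x ^ 2) := by
      rw [hθdef, show 2 * Real.arccos x / 2 = Real.arccos x by ring]
      exact Real.sin_arccos x
    have hspos : 0 < Real.sin (θ / 2) := by
      rw [hsin]
      apply Real.sqrt_pos.mpr
      nlinarith [hx.1, hx.2]
    have h₁ := hgall θ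
    have h₂ := hgall (-θ)
    rw [hgeval θ] at h₁
    rw [hgeval (-θ)] at h₂
    push_cast at h₂
    rw [heven θ] at h₂
    have hs2 : Complex.sin (-(θ:ℂ) / 2) = -((Real.sin (θ / 2) : ℝ) : ℂ) := by
      have h9 : (-(θ:ℂ)) / 2 = ((-(θ / 2) : ℝ) : ℂ) := by push_cast; ring
      rw [h9, ← Complex.ofReal_sin, Real.sin_neg]
      push_cast
      ring
    rw [hs2] at h₂
    rw [show -θ / 2 = -(θ / 2) by ring, Real.cos_neg] at h₂
    have e3 := (sub_eq_zero.mp h₁).symm.trans (sub_eq_zero.mp h₂)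
    have e4' : ((Real.sin (θ / 2) * B1.eval (Real.cos (θ / 2)) : ℝ) : ℂ) = 0 := by
      push_cast at e3 ⊢
      linear_combination (1 / 2 : ℂ) * e3
    have e4 : Real.sin (θ / 2) * B1.eval (Real.cos (θ / 2)) = 0 := by exact_mod_cast e4'
    rw [hcos] at e4
    rcases mul_eq_zero.mp e4 with h | h
    · exact absurd h (ne_of_gt hspos)
    · exact h
  apply B1.eq_zero_of_infinite_isRoot
  apply Set.Infinite.mono (s := Set.Ioo (-1 : ℝ) 1)
  · intro x hx
    exact hroot x hx
  · exact Set.Ioo_infinite (by norm_num)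
end

section
/- Given m+1 pairs of real numbers (x_j, y_j), j = 1, ..., m+1, with -1 < x_1 < x_2 < ... < x_{m+1} < 1, there exists a unique function F in Ω_m such that F(x_j) = y_j for all j. -/
/-! For `F = B₀ + √(1 - t²) B₁ ∈ Ω_m` the polynomial `P = B₀² - (1 - t²) B₁²` agrees with
`±F(t) F(-t)` on `[-1, 1]`; it is even and has degree at most `2m`. If `F` vanishes at `m + 1`
distinct nodes of `(-1, 1)`, then `P` vanishes at every `±x_j`, and whenever `a` and `-a` are both
nodes, `B₀` and `B₁` both vanish at `a`, which makes `a` a double root of `P`. So `P` has at least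
`2m + 2` roots counted with multiplicity and must be zero. For `t > 1` the terms `B₀(t)²` and
`(t² - 1) B₁(t)²` are both nonnegative, so `P = 0` forces `B₀ = B₁ = 0`. This proves uniqueness.
Existence follows because interpolation is a square linear system in the `m + 1` coefficients
of `(B₀, B₁)`, and uniqueness shows that this system is injective. -/

open Polynomial Real Set Pointwise

noncomputable section

theorem Polynomial.card_le_natDegree_of_forall_pow_count_dvd {R : Type*} [CommRing R]
    [IsDomain R] [DecidableEq R] {p : R[X]} (hp : p ≠ 0) {s : Multiset R}
    (hs : ∀ a, (X - C a) ^ s.count a ∣ p) : Multiset.card s ≤ p.natDegree := by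
  have hle : s ≤ p.roots := Multiset.le_iff_count.2 fun a => by
    rw [count_roots]
    exact (le_rootMultiplicity_iff hp).2 (hs a)
  exact (Multiset.card_le_card hle).trans (card_roots' p)

/-- The pair `(B₀, B₁)` represents the element `B₀ + √(1 - t²) B₁` of `Ω_m`. -/
structure IsOmega (m : ℕ) (B₀ B₁ : ℝ[X]) : Prop where
  degree_le : B₀.degree ≤ m
  degree_lt : B₁.degree < m
  eval_neg₀ : ∀ t, B₀.eval (-t) = (-1) ^ m * B₀.eval t
  eval_neg₁ : ∀ t, B₁.eval (-t) = (-1) ^ (m + 1) * B₁.eval t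

def omegaFun (B₀ B₁ : ℝ[X]) (t : ℝ) : ℝ := B₀.eval t + √(1 - t ^ 2) * B₁.eval t

def omegaNorm (B₀ B₁ : ℝ[X]) : ℝ[X] := B₀ ^ 2 - (1 - X ^ 2) * B₁ ^ 2

variable {m : ℕ} {B₀ B₁ C₀ C₁ : ℝ[X]}

theorem omegaFun_sub (t : ℝ) :
    omegaFun (B₀ - C₀) (B₁ - C₁) t = omegaFun B₀ B₁ t - omegaFun C₀ C₁ t := by
  simp only [omegaFun, eval_sub]
  ring

theorem eval_omegaNorm {t : ℝ} (ht : t ∈ Icc (-1) 1) :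
    (omegaNorm B₀ B₁).eval t = omegaFun B₀ B₁ t * (B₀.eval t - √(1 - t ^ 2) * B₁.eval t) := by
  have hs : √(1 - t ^ 2) ^ 2 = 1 - t ^ 2 := sq_sqrt (by nlinarith [ht.1, ht.2])
  simp only [omegaNorm, omegaFun, eval_sub, eval_mul, eval_pow, eval_one, eval_X]
  linear_combination B₁.eval t ^ 2 * hs

theorem eq_zero_of_omegaNorm_eq_zero (h : omegaNorm B₀ B₁ = 0) : B₀ = 0 ∧ B₁ = 0 := by
  have hroot : ∀ t ∈ Ioi (1 : ℝ), B₁.IsRoot t := fun t ht => by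
    have h_eval := congrArg (eval t) h
    simp only [omegaNorm, eval_sub, eval_mul, eval_pow, eval_one, eval_X, eval_zero] at h_eval
    have ht : 0 < t ^ 2 - 1 := by nlinarith [mem_Ioi.1 ht]
    have : B₁.eval t ^ 2 ≤ 0 := by nlinarith [sq_nonneg (B₀.eval t), sq_nonneg (B₁.eval t)]
    exact pow_eq_zero_iff two_ne_zero |>.1 (le_antisymm this (sq_nonneg _))
  have h₁ : B₁ = 0 := eq_zero_of_infinite_isRoot B₁ ((Ioi_infinite 1).mono hroot)
  refine ⟨pow_eq_zero_iff two_ne_zero |>.1 ?_, h₁⟩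
  simpa [omegaNorm, h₁, sub_eq_zero] using h

namespace IsOmega

theorem sub (hB : IsOmega m B₀ B₁) (hC : IsOmega m C₀ C₁) : IsOmega m (B₀ - C₀) (B₁ - C₁) where
  degree_le := (degree_sub_le _ _).trans (max_le hB.degree_le hC.degree_le)
  degree_lt := (degree_sub_le _ _).trans_lt (max_lt hB.degree_lt hC.degree_lt)
  eval_neg₀ t := by simp only [eval_sub, hB.eval_neg₀, hC.eval_neg₀]; ring
  eval_neg₁ t := by simp only [eval_sub, hB.eval_neg₁, hC.eval_neg₁]; ring

theorem omegaFun_neg (h : IsOmega m B₀ B₁) (t : ℝ) :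
    omegaFun B₀ B₁ (-t) = (-1) ^ m * (B₀.eval t - √(1 - t ^ 2) * B₁.eval t) := by
  simp only [omegaFun, neg_sq, h.eval_neg₀, h.eval_neg₁]
  ring

theorem eval_omegaNorm_neg (h : IsOmega m B₀ B₁) (t : ℝ) :
    (omegaNorm B₀ B₁).eval (-t) = (omegaNorm B₀ B₁).eval t := by
  have hsq : ∀ n : ℕ, ((-1 : ℝ) ^ n) ^ 2 = 1 := fun n => by rw [pow_right_comm, neg_one_sq, one_pow]
  simp only [omegaNorm, eval_sub, eval_mul, eval_pow, eval_one, eval_X, h.eval_neg₀, h.eval_neg₁,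
    mul_pow, hsq, neg_sq, one_mul]

theorem natDegree_omegaNorm_le (h : IsOmega m B₀ B₁) : (omegaNorm B₀ B₁).natDegree ≤ 2 * m := by
  have h₀ : B₀.natDegree ≤ m := natDegree_le_iff_degree_le.2 h.degree_le
  refine (natDegree_sub_le _ _).trans (max_le ?_ ?_)
  · rw [natDegree_pow]; omega
  · rcases eq_or_ne B₁ 0 with rfl | hB₁
    · simp
    have h₁ : B₁.natDegree < m := (natDegree_lt_iff_degree_lt hB₁).2 h.degree_lt
    refine natDegree_mul_le.trans ?_
    have : (1 - X ^ 2 : ℝ[X]).natDegree = 2 := by compute_degree!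
    rw [this, natDegree_pow]
    omega

theorem sq_X_sub_C_dvd_omegaNorm (h : IsOmega m B₀ B₁) {a : ℝ} (ha : a ∈ Ioo (-1) 1)
    (hpos : omegaFun B₀ B₁ a = 0) (hneg : omegaFun B₀ B₁ (-a) = 0) :
    (X - C a) ^ 2 ∣ omegaNorm B₀ B₁ := by
  have hs : 0 < √(1 - a ^ 2) := sqrt_pos.2 (by nlinarith [ha.1, ha.2])
  rw [h.omegaFun_neg, mul_eq_zero, or_iff_right (pow_ne_zero _ (by norm_num))] at hneg
  have h₁ : B₁.eval a = 0 := by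
    have : √(1 - a ^ 2) * B₁.eval a = 0 := by unfold omegaFun at hpos; linarith
    exact (mul_eq_zero.1 this).resolve_left hs.ne'
  have h₀ : B₀.eval a = 0 := by simpa [omegaFun, h₁] using hpos
  exact dvd_sub (pow_dvd_pow_of_dvd (dvd_iff_isRoot.2 h₀) 2)
    (dvd_mul_of_dvd_right (pow_dvd_pow_of_dvd (dvd_iff_isRoot.2 h₁) 2) _)

theorem eq_zero_of_omegaFun_eq_zero (h : IsOmega m B₀ B₁) {ι : Type*} [Fintype ι] {x : ι → ℝ}
    (hx : Function.Injective x) (hx₁ : ∀ i, x i ∈ Ioo (-1) 1) (hF : ∀ i, omegaFun B₀ B₁ (x i) = 0)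
    (hm : m < Fintype.card ι) : B₀ = 0 ∧ B₁ = 0 := by
  refine eq_zero_of_omegaNorm_eq_zero (by_contra fun hP => ?_)
  set N := Finset.univ.image x
  have hN : ∀ a ∈ N, a ∈ Ioo (-1) 1 := by simpa [N] using hx₁
  replace hF : ∀ a ∈ N, omegaFun B₀ B₁ a = 0 := by simpa [N] using hF
  replace hm : m < N.card := by rwa [Finset.card_image_of_injective _ hx, Finset.card_univ]
  have hroot : ∀ a ∈ N, (omegaNorm B₀ B₁).IsRoot a := fun a ha => by
    rw [IsRoot, eval_omegaNorm (Ioo_subset_Icc_self (hN a ha)), hF a ha, zero_mul]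
  have hdvd : ∀ a, (X - C a) ^ (N.val + (-N).val).count a ∣ omegaNorm B₀ B₁ := fun a => by
    simp only [Multiset.count_add, Multiset.count_eq_of_nodup N.nodup,
      Multiset.count_eq_of_nodup (-N).nodup, Finset.mem_val, Finset.mem_neg']
    split_ifs with ha hna hna
    · exact h.sq_X_sub_C_dvd_omegaNorm (hN a ha) (hF a ha) (hF _ hna)
    · rw [add_zero, pow_one, dvd_iff_isRoot]
      exact hroot a ha
    · rw [zero_add, pow_one, dvd_iff_isRoot, IsRoot, ← neg_neg a, h.eval_omegaNorm_neg]
      exact hroot _ hna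
    · simp
  have hcard := Polynomial.card_le_natDegree_of_forall_pow_count_dvd hP hdvd
  rw [Multiset.card_add, Finset.card_val, Finset.card_val, Finset.card_neg] at hcard
  have := h.natDegree_omegaNorm_le
  omega

end IsOmega

def parityPoly (c : Fin (m + 1) → ℝ) (p : ℕ) : ℝ[X] :=
  ∑ k : Fin (m + 1), if k.val % 2 = p % 2 then C (c k) * X ^ k.val else 0

theorem eval_parityPoly (c : Fin (m + 1) → ℝ) (p : ℕ) (t : ℝ) :
    (parityPoly c p).eval t =
      ∑ k : Fin (m + 1), if k.val % 2 = p % 2 then c k * t ^ k.val else 0 := by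
  simp only [parityPoly, eval_finsetSum, apply_ite (eval t), eval_mul, eval_C, eval_pow, eval_X,
    eval_zero]

theorem coeff_parityPoly (c : Fin (m + 1) → ℝ) (p : ℕ) (k : Fin (m + 1)) :
    (parityPoly c p).coeff k = if k.val % 2 = p % 2 then c k else 0 := by
  rw [parityPoly, finsetSum_coeff, Finset.sum_eq_single k]
  · split_ifs <;> simp
  · intro i _ hik
    split_ifs <;> simp [Fin.val_ne_of_ne hik.symm]
  · simp

theorem eval_neg_parityPoly (c : Fin (m + 1) → ℝ) (p : ℕ) (t : ℝ) :
    (parityPoly c p).eval (-t) = (-1) ^ p * (parityPoly c p).eval t := by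
  rw [eval_parityPoly, eval_parityPoly, Finset.mul_sum]
  refine Finset.sum_congr rfl fun k _ => ?_
  split_ifs with hk
  · rw [neg_pow, neg_one_pow_eq_pow_mod_two, hk, ← neg_one_pow_eq_pow_mod_two]
    ring
  · rw [mul_zero]

theorem degree_parityPoly_lt (c : Fin (m + 1) → ℝ) (p n : ℕ)
    (hn : ∀ k : Fin (m + 1), k.val % 2 = p % 2 → k.val < n) : (parityPoly c p).degree < n := by
  refine (degree_sum_le _ _).trans_lt ((Finset.sup_lt_iff (WithBot.bot_lt_coe n)).2 fun k _ => ?_)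
  split_ifs with hk
  · exact (degree_C_mul_X_pow_le _ _).trans_lt (WithBot.coe_lt_coe.2 (hn k hk))
  · exact degree_zero.trans_lt (WithBot.bot_lt_coe n)

theorem isOmega_parityPoly (c : Fin (m + 1) → ℝ) :
    IsOmega m (parityPoly c m) (parityPoly c (m + 1)) where
  degree_le := Order.le_of_lt_succ (degree_parityPoly_lt c m (m + 1) fun k _ => k.isLt)
  degree_lt := degree_parityPoly_lt c (m + 1) m fun k hk => by omega
  eval_neg₀ := eval_neg_parityPoly c m
  eval_neg₁ := eval_neg_parityPoly c (m + 1)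

theorem eq_zero_of_parityPoly_eq_zero {c : Fin (m + 1) → ℝ} (h₀ : parityPoly c m = 0)
    (h₁ : parityPoly c (m + 1) = 0) : c = 0 := by
  funext k
  by_cases hk : k.val % 2 = m % 2
  · simpa [hk, h₀] using (coeff_parityPoly c m k).symm
  · have hk' : k.val % 2 = (m + 1) % 2 := by omega
    simpa [hk', h₁] using (coeff_parityPoly c (m + 1) k).symm

def interpMatrix (x : Fin (m + 1) → ℝ) : Matrix (Fin (m + 1)) (Fin (m + 1)) ℝ :=
  Matrix.of fun j k => (if k.val % 2 = m % 2 then 1 else √(1 - x j ^ 2)) * x j ^ k.val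

theorem interpMatrix_mulVec (x c : Fin (m + 1) → ℝ) (j : Fin (m + 1)) :
    (interpMatrix x).mulVec c j = omegaFun (parityPoly c m) (parityPoly c (m + 1)) (x j) := by
  rw [Matrix.mulVec, dotProduct, omegaFun, eval_parityPoly, eval_parityPoly, Finset.mul_sum,
    ← Finset.sum_add_distrib]
  refine Finset.sum_congr rfl fun k _ => ?_
  by_cases hk : k.val % 2 = m % 2
  · rw [if_pos hk, if_neg (by omega)]
    simp only [interpMatrix, Matrix.of_apply, if_pos hk]
    ring
  · rw [if_neg hk, if_pos (by omega)]
    simp only [interpMatrix, Matrix.of_apply, if_neg hk]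
    ring

theorem exists_isOmega_omegaFun_eq {x : Fin (m + 1) → ℝ} (hx : Function.Injective x)
    (hx₁ : ∀ j, x j ∈ Ioo (-1) 1) (y : Fin (m + 1) → ℝ) :
    ∃ B₀ B₁, IsOmega m B₀ B₁ ∧ ∀ j, omegaFun B₀ B₁ (x j) = y j := by
  have hinj : Function.Injective (interpMatrix x).mulVec := by
    refine (injective_iff_map_eq_zero (interpMatrix x).mulVecLin).2 fun c hc => ?_
    have hzero : ∀ j, omegaFun (parityPoly c m) (parityPoly c (m + 1)) (x j) = 0 := fun j => by
      rw [← interpMatrix_mulVec, ← Matrix.mulVecLin_apply, hc, Pi.zero_apply]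
    obtain ⟨h₀, h₁⟩ :=
      (isOmega_parityPoly c).eq_zero_of_omegaFun_eq_zero hx hx₁ hzero (by simp)
    exact eq_zero_of_parityPoly_eq_zero h₀ h₁
  obtain ⟨c, hc⟩ :=
    Matrix.mulVec_surjective_iff_isUnit.2 (Matrix.mulVec_injective_iff_isUnit.1 hinj) y
  exact ⟨_, _, isOmega_parityPoly c, fun j => by rw [← interpMatrix_mulVec, hc]⟩

end

/-- Given `m+1` interpolation points `-1 < x_1 < ... < x_{m+1} < 1` and values
`y_j`, there is a unique function in `Ω_m` interpolating them. -/
theorem stmt_4 (m : ℕ) (x y : Fin (m + 1) → ℝ)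
    (hx : StrictMono x) (hx1 : ∀ j, x j ∈ Set.Ioo (-1 : ℝ) 1) :
    ∃ B0 B1 : Polynomial ℝ,
      (B0.degree ≤ (m : ℕ) ∧ B1.degree < (m : ℕ) ∧
        (∀ t : ℝ, B0.eval (-t) = (-1 : ℝ) ^ m * B0.eval t) ∧
        (∀ t : ℝ, B1.eval (-t) = (-1 : ℝ) ^ (m + 1) * B1.eval t) ∧
        (∀ j, B0.eval (x j) + Real.sqrt (1 - (x j) ^ 2) * B1.eval (x j) = y j)) ∧
      (∀ C0 C1 : Polynomial ℝ,
        C0.degree ≤ (m : ℕ) → C1.degree < (m : ℕ) →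
        (∀ t : ℝ, C0.eval (-t) = (-1 : ℝ) ^ m * C0.eval t) →
        (∀ t : ℝ, C1.eval (-t) = (-1 : ℝ) ^ (m + 1) * C1.eval t) →
        (∀ j, C0.eval (x j) + Real.sqrt (1 - (x j) ^ 2) * C1.eval (x j) = y j) →
        ∀ t ∈ Set.Icc (-1 : ℝ) 1,
          C0.eval t + Real.sqrt (1 - t ^ 2) * C1.eval t =
            B0.eval t + Real.sqrt (1 - t ^ 2) * B1.eval t) := by
  obtain ⟨B₀, B₁, hB, hBx⟩ := exists_isOmega_omegaFun_eq hx.injective hx1 y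
  refine ⟨B₀, B₁, ⟨hB.degree_le, hB.degree_lt, hB.eval_neg₀, hB.eval_neg₁, hBx⟩, ?_⟩
  intro C₀ C₁ hC₀ hC₁ hC₀_neg hC₁_neg hCx t _
  have hC : IsOmega m C₀ C₁ := ⟨hC₀, hC₁, hC₀_neg, hC₁_neg⟩
  have hdiff : ∀ j, omegaFun (C₀ - B₀) (C₁ - B₁) (x j) = 0 := fun j => by
    rw [omegaFun_sub, sub_eq_zero]
    exact (hCx j).trans (hBx j).symm
  obtain ⟨h₀, h₁⟩ := (hC.sub hB).eq_zero_of_omegaFun_eq_zero hx.injective hx1 hdiff (by simp)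
  rw [sub_eq_zero.1 h₀, sub_eq_zero.1 h₁]
end

section
/- Let ψ be a positive measure on [-1,1] and let {W_m} with W_m ∈ Ω_m of exact degree m satisfy: ∫ W_{2n} W_{2m} √(1-x²) dψ = ρ_{2m} δ_{n,m}, ∫ W_{2n+1} W_{2m+1} √(1-x²) dψ = ρ_{2m+1} δ_{n,m}, ∫ W_{2n+1} W_{2m} dψ = 0 for all n, m ≥ 0, with ρ_m > 0. Then for every m ≥ 1 and every F ∈ Ω_{m-1}: ∫_{-1}^{1} F(x) W_m(x) dψ(x) = 0. -/
open Polynomial Real MeasureTheory Set Submodule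

/-!
Encode `B⁰ + √(1-x²) B¹` by the pair `(B⁰, B¹)`. Multiplication by `√(1-x²)` maps `Ω_L` into
`Ω_{L+1}`, and an element of `Ω_{L+2}` whose two leading coefficients vanish lies in `Ω_L`.
Hence, as soon as the leading coefficients of `W_{L+1}` and `√(1-x²) W_L` are linearly
independent in `ℝ²`, `Ω_{L+1} = span {W_{L+1}, √(1-x²) W_L} + Ω_{L-1}`, and the three
orthogonality relations give `∫ F W_m dψ = 0` for `F ∈ Ω_L`, `L < m`, `L + m` odd, by induction
on `L`. The independence comes from the case `m = L`, proved earlier in an outer induction: a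
relation would put `s W_{L+1} + t √(1-x²) W_L` into `Ω_{L-1}`, hence make it orthogonal to `W_L`,
which forces `t ρ_L = 0` and then `s = 0`.
-/

lemma Nat.odd_add_cases {a b : ℕ} (h : Odd (a + b)) :
    (∃ n k, a = 2 * n + 1 ∧ b = 2 * k) ∨ ∃ n k, a = 2 * n ∧ b = 2 * k + 1 := by
  obtain ⟨n, rfl | rfl⟩ := Nat.even_or_odd' a <;> obtain ⟨k, rfl | rfl⟩ := Nat.even_or_odd' b
  · grind
  · exact .inr ⟨n, k, rfl, rfl⟩
  · exact .inl ⟨n, k, rfl, rfl⟩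
  · grind

lemma Nat.even_add_cases {a b : ℕ} (h : Even (a + b)) :
    (∃ n k, a = 2 * n ∧ b = 2 * k) ∨ ∃ n k, a = 2 * n + 1 ∧ b = 2 * k + 1 := by
  obtain ⟨n, rfl | rfl⟩ := Nat.even_or_odd' a <;> obtain ⟨k, rfl | rfl⟩ := Nat.even_or_odd' b
  · exact .inl ⟨n, k, rfl, rfl⟩
  · grind
  · grind
  · exact .inr ⟨n, k, rfl, rfl⟩

lemma Polynomial.coeff_eq_zero_of_eval_neg {p : ℝ[X]} {L k : ℕ}
    (hp : ∀ t, p.eval (-t) = (-1) ^ L * p.eval t) (hk : Odd (k + L)) : p.coeff k = 0 := by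
  have hcomp : p.comp (C (-1) * X) = C ((-1) ^ L) * p :=
    Polynomial.funext fun t => by simpa using hp t
  have hcoeff := congrArg (coeff · k) hcomp
  simp only [comp_C_mul_X_coeff, coeff_C_mul] at hcoeff
  have hsign : ((-1 : ℝ) ^ k) * (-1) ^ L = -1 := by rw [← pow_add, hk.neg_one_pow]
  have hsq : ((-1 : ℝ) ^ k) * (-1) ^ k = 1 := by rw [← mul_pow]; norm_num
  linear_combination ((-1) ^ k / 2) * hcoeff + (p.coeff k / 2) * hsign - (p.coeff k / 2) * hsq

noncomputable section

namespace SqrtPoly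

/-- The pair `F = (P, Q)` stands for the function `P(x) + √(1 - x²) Q(x)` on `[-1, 1]`. -/
def eval (x : ℝ) : ℝ[X] × ℝ[X] →ₗ[ℝ] ℝ where
  toFun F := F.1.eval x + √(1 - x ^ 2) * F.2.eval x
  map_add' F G := by simp only [Prod.fst_add, Prod.snd_add, eval_add]; ring
  map_smul' c F := by
    simp only [Prod.smul_fst, Prod.smul_snd, eval_smul, smul_eq_mul, RingHom.id_apply]; ring

def mulSqrt : ℝ[X] × ℝ[X] →ₗ[ℝ] ℝ[X] × ℝ[X] where
  toFun F := ((1 - X ^ 2) * F.2, F.1)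
  map_add' F G := by simp only [Prod.fst_add, Prod.snd_add, mul_add, Prod.mk_add_mk]
  map_smul' c F := by
    simp only [Prod.smul_fst, Prod.smul_snd, mul_smul_comm, RingHom.id_apply, Prod.smul_mk]

def Ω (L : ℕ) : Submodule ℝ (ℝ[X] × ℝ[X]) where
  carrier := {F | (∀ k, L < k ∨ Odd (k + L) → F.1.coeff k = 0) ∧
    ∀ k, L ≤ k ∨ Even (k + L) → F.2.coeff k = 0}
  add_mem' hF hG := ⟨fun k hk => by simp [hF.1 k hk, hG.1 k hk],
    fun k hk => by simp [hF.2 k hk, hG.2 k hk]⟩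
  zero_mem' := ⟨fun _ _ => rfl, fun _ _ => rfl⟩
  smul_mem' c F hF := ⟨fun k hk => by simp [hF.1 k hk], fun k hk => by simp [hF.2 k hk]⟩

/-- `W ∈ Ω L` has exact degree `L` in the paper's sense iff `lead L W ≠ 0`. -/
def lead (L : ℕ) : ℝ[X] × ℝ[X] →ₗ[ℝ] ℝ × ℝ :=
  ((lcoeff ℝ L).comp (LinearMap.fst ℝ _ _)).prod ((lcoeff ℝ (L - 1)).comp (LinearMap.snd ℝ _ _))

lemma lead_apply (L : ℕ) (F : ℝ[X] × ℝ[X]) : lead L F = (F.1.coeff L, F.2.coeff (L - 1)) := rfl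

lemma mk_mem_Ω {L : ℕ} {P Q : ℝ[X]} (hP : P.degree ≤ L) (hQ : Q.degree < L)
    (hPsym : ∀ t, P.eval (-t) = (-1) ^ L * P.eval t)
    (hQsym : ∀ t, Q.eval (-t) = (-1) ^ (L + 1) * Q.eval t) : (P, Q) ∈ Ω L := by
  refine ⟨fun k hk => ?_, fun k hk => ?_⟩
  · rcases hk with hk | hk
    · exact coeff_eq_zero_of_degree_lt (hP.trans_lt (by exact_mod_cast hk))
    · exact coeff_eq_zero_of_eval_neg hPsym hk
  · rcases hk with hk | hk
    · exact coeff_eq_zero_of_degree_lt (hQ.trans_le (by exact_mod_cast hk))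
    · exact coeff_eq_zero_of_eval_neg hQsym (by grind)

lemma mulSqrt_mem_Ω {L : ℕ} {F : ℝ[X] × ℝ[X]} (hF : F ∈ Ω L) : mulSqrt F ∈ Ω (L + 1) := by
  obtain ⟨hP, hQ⟩ := hF
  refine ⟨fun k hk => ?_, fun k hk => hP k (by grind)⟩
  have hmul : (1 - X ^ 2) * F.2 = F.2 - X ^ 2 * F.2 := by ring
  change ((1 - X ^ 2) * F.2).coeff k = 0
  rw [hmul, coeff_sub, coeff_X_pow_mul', hQ k (by grind)]
  split_ifs with h2
  · rw [hQ (k - 2) (by grind), sub_zero]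
  · rw [sub_zero]

lemma Ω_add_two_inf_ker_lead_le (L : ℕ) : Ω (L + 2) ⊓ LinearMap.ker (lead (L + 2)) ≤ Ω L := by
  intro F hF
  obtain ⟨⟨hP, hQ⟩, hlead⟩ := mem_inf.1 hF
  rw [LinearMap.mem_ker, lead_apply, Prod.mk_eq_zero] at hlead
  refine ⟨fun k hk => ?_, fun k hk => ?_⟩
  · rcases eq_or_ne k (L + 2) with rfl | hk2
    · exact hlead.1
    · exact hP k (by grind)
  · rcases eq_or_ne k (L + 1) with rfl | hk1
    · exact hlead.2
    · exact hQ k (by grind)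

lemma Ω_inf_ker_lead_eq_bot {L : ℕ} (hL : L ≤ 1) : Ω L ⊓ LinearMap.ker (lead L) = ⊥ := by
  refine eq_bot_iff.2 fun F hF => ?_
  obtain ⟨⟨hP, hQ⟩, hlead⟩ := mem_inf.1 hF
  rw [LinearMap.mem_ker, lead_apply, Prod.mk_eq_zero] at hlead
  refine Prod.ext (Polynomial.ext fun k => ?_) (Polynomial.ext fun k => ?_)
  · rcases eq_or_ne k L with rfl | hk
    · exact hlead.1
    · exact hP k (by grind)
  · rcases eq_or_ne k (L - 1) with rfl | hk
    · exact hlead.2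
    · exact hQ k (by grind)

lemma Ω_succ_inf_ker_lead_le {L : ℕ} {f : ℝ[X] × ℝ[X] →ₗ[ℝ] ℝ}
    (h : ∀ L', L = L' + 1 → Ω L' ≤ LinearMap.ker f) :
    Ω (L + 1) ⊓ LinearMap.ker (lead (L + 1)) ≤ LinearMap.ker f := by
  rcases L with _ | L
  · simp [Ω_inf_ker_lead_eq_bot]
  · exact (Ω_add_two_inf_ker_lead_le L).trans (h L rfl)

lemma Ω_zero_le_span {G : ℝ[X] × ℝ[X]} (hG : G ∈ Ω 0) (hG0 : lead 0 G ≠ 0) :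
    Ω 0 ≤ span ℝ {G} := by
  have hG2 : G.2.coeff 0 = 0 := hG.2 0 (Or.inl le_rfl)
  have hG1 : G.1.coeff 0 ≠ 0 := fun h => hG0 (by simp [lead_apply, h, hG2])
  intro F hF
  have hF2 : F.2.coeff 0 = 0 := hF.2 0 (Or.inl le_rfl)
  have hker : F - (F.1.coeff 0 / G.1.coeff 0) • G ∈ Ω 0 ⊓ LinearMap.ker (lead 0) :=
    ⟨sub_mem hF (smul_mem _ _ hG), by simp [lead_apply, hF2, hG2, hG1]⟩
  rw [Ω_inf_ker_lead_eq_bot zero_le_one, mem_bot, sub_eq_zero] at hker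
  exact hker ▸ smul_mem _ _ (subset_span rfl)

lemma Ω_le_span_sup {L : ℕ} {G H : ℝ[X] × ℝ[X]} (hG : G ∈ Ω L) (hH : H ∈ Ω L)
    (hli : LinearIndependent ℝ ![lead L G, lead L H]) :
    Ω L ≤ span ℝ {G, H} ⊔ (Ω L ⊓ LinearMap.ker (lead L)) := by
  intro F hF
  have hspan : span ℝ {lead L G, lead L H} = ⊤ := by
    rw [← Matrix.range_cons_cons_empty]
    exact hli.span_eq_top_of_card_eq_finrank (by simp)
  obtain ⟨c, d, hcd⟩ := mem_span_pair.1 (hspan ▸ mem_top : lead L F ∈ span ℝ {lead L G, lead L H})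
  refine mem_sup.2 ⟨c • G + d • H, mem_span_pair.2 ⟨c, d, rfl⟩, F - (c • G + d • H),
    ⟨sub_mem hF (add_mem (smul_mem _ _ hG) (smul_mem _ _ hH)), ?_⟩, add_sub_cancel _ _⟩
  simp [hcd]

lemma linearIndependent_lead {L : ℕ} {G H : ℝ[X] × ℝ[X]} {f : ℝ[X] × ℝ[X] →ₗ[ℝ] ℝ}
    (hG : G ∈ Ω L) (hH : H ∈ Ω L) (hG0 : lead L G ≠ 0) (hfG : f G = 0) (hfH : f H ≠ 0)
    (hker : Ω L ⊓ LinearMap.ker (lead L) ≤ LinearMap.ker f) :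
    LinearIndependent ℝ ![lead L G, lead L H] := by
  refine LinearIndependent.pair_iff.2 fun s t hst => ?_
  have hf := hker ⟨add_mem (smul_mem _ s hG) (smul_mem _ t hH), by simpa using hst⟩
  have ht : t = 0 := by simpa [hfG, hfH] using hf
  subst ht
  simpa [hG0] using hst

theorem Ω_le_ker_of_orthogonal (φ : ℕ → ℝ[X] × ℝ[X] →ₗ[ℝ] ℝ) (V : ℕ → ℝ[X] × ℝ[X])
    (hV : ∀ k, V k ∈ Ω k) (hlead : ∀ k, lead k (V k) ≠ 0)
    (hodd : ∀ a b, Odd (a + b) → φ b (V a) = 0)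
    (hsqrt : ∀ a b, a < b → Even (a + b) → φ b (mulSqrt (V a)) = 0)
    (hnorm : ∀ a, φ a (mulSqrt (V a)) ≠ 0) :
    ∀ m L, L < m → Odd (L + m) → Ω L ≤ LinearMap.ker (φ m) := by
  intro m
  induction m using Nat.strong_induction_on with | _ m ihm => ?_
  intro L
  induction L using Nat.strong_induction_on with | _ L ihL => ?_
  intro hLm hLm_odd
  rcases L with _ | L
  · exact (Ω_zero_le_span (hV 0) (hlead 0)).trans
      (span_singleton_le_iff_mem _ _ |>.2 (hodd 0 m hLm_odd))
  have hli := linearIndependent_lead (hV (L + 1)) (mulSqrt_mem_Ω (hV L)) (hlead (L + 1))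
    (hodd (L + 1) L (by grind)) (hnorm L)
    (Ω_succ_inf_ker_lead_le fun L' hL' => ihm L (by omega) L' (by omega) (by grind))
  refine (Ω_le_span_sup (hV (L + 1)) (mulSqrt_mem_Ω (hV L)) hli).trans (sup_le ?_ ?_)
  · rw [span_le, insert_subset_iff, singleton_subset_iff]
    exact ⟨hodd (L + 1) m hLm_odd, hsqrt L m (by omega) (by grind)⟩
  · exact Ω_succ_inf_ker_lead_le fun L' hL' => ihL L' (by omega) (by omega) (by grind)

lemma continuous_eval (F : ℝ[X] × ℝ[X]) : Continuous fun x => eval x F :=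
  F.1.continuous.add ((continuous_const.sub (continuous_pow 2)).sqrt.mul F.2.continuous)

lemma eval_mulSqrt {x : ℝ} (hx : x ∈ Icc (-1 : ℝ) 1) (F : ℝ[X] × ℝ[X]) :
    eval x (mulSqrt F) = √(1 - x ^ 2) * eval x F := by
  have hsq : √(1 - x ^ 2) * √(1 - x ^ 2) = 1 - x ^ 2 :=
    mul_self_sqrt (by nlinarith [hx.1, hx.2])
  change ((1 - X ^ 2) * F.2).eval x + √(1 - x ^ 2) * F.1.eval x =
    √(1 - x ^ 2) * (F.1.eval x + √(1 - x ^ 2) * F.2.eval x)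
  simp only [eval_mul, eval_sub, eval_one, eval_pow, eval_X]
  linear_combination (-F.2.eval x) * hsq

def integralPairing (ψ : Measure ℝ) [IsFiniteMeasureOnCompacts ψ] (G : ℝ[X] × ℝ[X]) :
    ℝ[X] × ℝ[X] →ₗ[ℝ] ℝ where
  toFun F := ∫ x in Icc (-1 : ℝ) 1, eval x F * eval x G ∂ψ
  map_add' F F' := by
    simp only [map_add, add_mul]
    exact integral_add
      (((continuous_eval F).mul (continuous_eval G)).integrableOn_Icc)
      (((continuous_eval F').mul (continuous_eval G)).integrableOn_Icc)
  map_smul' c F := by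
    simp only [map_smul, smul_eq_mul, mul_assoc, RingHom.id_apply]
    exact integral_const_mul c _

end SqrtPoly

end

lemma setIntegral_mul_eq_zero_of_odd_add {ψ : Measure ℝ} {W : ℕ → ℝ → ℝ}
    (horth : ∀ n k : ℕ, ∫ x in Icc (-1 : ℝ) 1, W (2 * n + 1) x * W (2 * k) x ∂ψ = 0)
    {a b : ℕ} (hab : Odd (a + b)) : ∫ x in Icc (-1 : ℝ) 1, W a x * W b x ∂ψ = 0 := by
  rcases Nat.odd_add_cases hab with ⟨n, k, rfl, rfl⟩ | ⟨n, k, rfl, rfl⟩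
  · exact horth n k
  · simpa only [mul_comm] using horth k n

lemma setIntegral_mul_mul_sqrt_of_even_add {ψ : Measure ℝ} {W : ℕ → ℝ → ℝ} {ρ : ℕ → ℝ}
    (horth1 : ∀ n k : ℕ,
      ∫ x in Icc (-1 : ℝ) 1, W (2 * n) x * W (2 * k) x * √(1 - x ^ 2) ∂ψ =
        if n = k then ρ (2 * k) else 0)
    (horth2 : ∀ n k : ℕ,
      ∫ x in Icc (-1 : ℝ) 1, W (2 * n + 1) x * W (2 * k + 1) x * √(1 - x ^ 2) ∂ψ =
        if n = k then ρ (2 * k + 1) else 0)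
    {a b : ℕ} (hab : Even (a + b)) :
    ∫ x in Icc (-1 : ℝ) 1, W a x * W b x * √(1 - x ^ 2) ∂ψ = if a = b then ρ b else 0 := by
  rcases Nat.even_add_cases hab with ⟨n, k, rfl, rfl⟩ | ⟨n, k, rfl, rfl⟩
  · simp [horth1]
  · simp [horth2]

/-- If `{W_m}` with `W_m ∈ Ω_m` of exact degree `m` satisfies the
orthogonality relations
`∫ W_{2n} W_{2m} √(1-x²) dψ = ρ_{2m} δ_{n,m}`,
`∫ W_{2n+1} W_{2m+1} √(1-x²) dψ = ρ_{2m+1} δ_{n,m}`,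
`∫ W_{2n+1} W_{2m} dψ = 0`, then `∫ F W_m dψ = 0` for every `F ∈ Ω_{m-1}`, `m ≥ 1`. -/
theorem stmt_11 (ψ : Measure ℝ) [IsFiniteMeasure ψ]
    (W : ℕ → ℝ → ℝ) (A0 A1 : ℕ → Polynomial ℝ) (ρ : ℕ → ℝ)
    (hA0deg : ∀ k, (A0 k).degree ≤ (k : ℕ)) (hA1deg : ∀ k, (A1 k).degree < (k : ℕ))
    (hA0sym : ∀ k, ∀ t : ℝ, (A0 k).eval (-t) = (-1 : ℝ) ^ k * (A0 k).eval t)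
    (hA1sym : ∀ k, ∀ t : ℝ, (A1 k).eval (-t) = (-1 : ℝ) ^ (k + 1) * (A1 k).eval t)
    (hdecomp : ∀ k, ∀ x ∈ Set.Icc (-1 : ℝ) 1,
      W k x = (A0 k).eval x + Real.sqrt (1 - x ^ 2) * (A1 k).eval x)
    (hexact : ∀ k, (A0 k).coeff k ^ 2 + (A1 k).coeff (k - 1) ^ 2 > 0)
    (hρ : ∀ k, 0 < ρ k)
    (horth1 : ∀ n k : ℕ,
      ∫ x in Set.Icc (-1 : ℝ) 1, W (2 * n) x * W (2 * k) x * Real.sqrt (1 - x ^ 2) ∂ψ =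
        if n = k then ρ (2 * k) else 0)
    (horth2 : ∀ n k : ℕ,
      ∫ x in Set.Icc (-1 : ℝ) 1,
          W (2 * n + 1) x * W (2 * k + 1) x * Real.sqrt (1 - x ^ 2) ∂ψ =
        if n = k then ρ (2 * k + 1) else 0)
    (horth3 : ∀ n k : ℕ,
      ∫ x in Set.Icc (-1 : ℝ) 1, W (2 * n + 1) x * W (2 * k) x ∂ψ = 0) :
    ∀ m : ℕ, 1 ≤ m → ∀ B0 B1 : Polynomial ℝ,
      B0.degree ≤ ((m - 1 : ℕ) : ℕ) → B1.degree < ((m - 1 : ℕ) : ℕ) →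
      (∀ t : ℝ, B0.eval (-t) = (-1 : ℝ) ^ (m - 1) * B0.eval t) →
      (∀ t : ℝ, B1.eval (-t) = (-1 : ℝ) ^ m * B1.eval t) →
      ∫ x in Set.Icc (-1 : ℝ) 1,
        (B0.eval x + Real.sqrt (1 - x ^ 2) * B1.eval x) * W m x ∂ψ = 0 := by
  intro m hm B0 B1 hB0 hB1 hB0sym hB1sym
  set V : ℕ → ℝ[X] × ℝ[X] := fun k => (A0 k, A1 k)
  have hW : ∀ k, ∀ x ∈ Icc (-1 : ℝ) 1, W k x = SqrtPoly.eval x (V k) := hdecomp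
  have hpair : ∀ a b, SqrtPoly.integralPairing ψ (V b) (V a) =
      ∫ x in Icc (-1 : ℝ) 1, W a x * W b x ∂ψ := fun a b =>
    setIntegral_congr_fun measurableSet_Icc fun x hx => by simp only [hW a x hx, hW b x hx]
  have hpairSqrt : ∀ a b, SqrtPoly.integralPairing ψ (V b) (SqrtPoly.mulSqrt (V a)) =
      ∫ x in Icc (-1 : ℝ) 1, W a x * W b x * √(1 - x ^ 2) ∂ψ := fun a b =>
    setIntegral_congr_fun measurableSet_Icc fun x hx => by
      simp only [SqrtPoly.eval_mulSqrt hx, hW a x hx, hW b x hx]; ring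
  have hodd : ∀ a b, Odd (a + b) → SqrtPoly.integralPairing ψ (V b) (V a) = 0 := fun a b hab =>
    (hpair a b).trans (setIntegral_mul_eq_zero_of_odd_add horth3 hab)
  have hsqrt : ∀ a b, Even (a + b) →
      SqrtPoly.integralPairing ψ (V b) (SqrtPoly.mulSqrt (V a)) = if a = b then ρ b else 0 :=
    fun a b hab => (hpairSqrt a b).trans (setIntegral_mul_mul_sqrt_of_even_add horth1 horth2 hab)
  have hB : (B0, B1) ∈ SqrtPoly.Ω (m - 1) :=
    SqrtPoly.mk_mem_Ω hB0 hB1 hB0sym (by rwa [Nat.sub_add_cancel hm])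
  have horth := SqrtPoly.Ω_le_ker_of_orthogonal (fun k => SqrtPoly.integralPairing ψ (V k)) V
    (fun k => SqrtPoly.mk_mem_Ω (hA0deg k) (hA1deg k) (hA0sym k) (hA1sym k))
    (fun k h => (hexact k).ne' <| by
      change ((A0 k).coeff k, (A1 k).coeff (k - 1)) = 0 at h
      obtain ⟨h0, h1⟩ := Prod.mk_eq_zero.1 h
      rw [h0, h1, zero_pow two_ne_zero, add_zero])
    hodd (fun a b hab he => by rw [hsqrt a b he, if_neg hab.ne])
    (fun a => by rw [hsqrt a a ⟨a, rfl⟩, if_pos rfl]; exact (hρ a).ne')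
    m (m - 1) (by omega) (by grind) hB
  rw [← horth]
  exact setIntegral_congr_fun measurableSet_Icc fun x hx => by rw [hW m x hx]; rfl
end

section
/- Suppose {W_m}, W_m ∈ Ω_m of exact degree m, satisfies ∫ F(x) W_m(x) dψ(x) = 0 for all F ∈ Ω_{m-1} and m ≥ 1, where ψ is a positive measure on [-1,1]. Then for m ≥ 1 and s = 0, 1, ..., m-1: ∫_{-1}^{1} (x + i√(1-x²))^{-m+1+2s} W_m(x) dψ(x) = 0. -/
open Polynomial Real MeasureTheory Complex Polynomial.Chebyshev

lemma degT : ∀ k : ℕ, (T ℝ (k : ℤ)).degree ≤ (k : ℕ)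
  | 0 => by simp
  | 1 => by simpa using degree_X_le
  | (k+2) => by
    have h1 := degT k
    have h2 := degT (k+1)
    have : ((k+2 : ℕ) : ℤ) = (k : ℤ) + 2 := by push_cast; ring
    rw [this, T_add_two]
    refine le_trans (degree_sub_le _ _) ?_
    rw [max_le_iff]
    constructor
    · refine le_trans (degree_mul_le _ _) ?_
      refine le_trans (add_le_add (degree_mul_le _ _) le_rfl) ?_
      have hX : (X : ℝ[X]).degree ≤ 1 := degree_X_le
      have h2' : (2 : ℝ[X]).degree ≤ 0 := degree_le_of_natDegree_le (by simp)
      calc (2 : ℝ[X]).degree + (X : ℝ[X]).degree + (T ℝ ((k:ℤ)+1)).degree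
          ≤ 0 + 1 + ((k+1 : ℕ) : WithBot ℕ) := by
            refine add_le_add (add_le_add h2' hX) ?_
            exact_mod_cast h2
        _ ≤ ((k+2 : ℕ) : WithBot ℕ) := by
            push_cast
            rw [zero_add]
            norm_cast
            omega
    · exact le_trans h1 (by norm_cast; omega)

lemma degU : ∀ k : ℕ, (U ℝ (k : ℤ)).degree ≤ (k : ℕ)
  | 0 => by simp
  | 1 => by
    simp only [Nat.cast_one, U_one]
    refine le_trans (degree_mul_le _ _) ?_
    have h2' : (2 : ℝ[X]).degree ≤ 0 := degree_le_of_natDegree_le (by simp)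
    calc (2 : ℝ[X]).degree + (X : ℝ[X]).degree ≤ 0 + 1 := add_le_add h2' degree_X_le
      _ ≤ (1 : ℕ) := by norm_num
  | (k+2) => by
    have h1 := degU k
    have h2 := degU (k+1)
    have : ((k+2 : ℕ) : ℤ) = (k : ℤ) + 2 := by push_cast; ring
    rw [this, U_add_two]
    refine le_trans (degree_sub_le _ _) ?_
    rw [max_le_iff]
    constructor
    · refine le_trans (degree_mul_le _ _) ?_
      refine le_trans (add_le_add (degree_mul_le _ _) le_rfl) ?_
      have h2' : (2 : ℝ[X]).degree ≤ 0 := degree_le_of_natDegree_le (by simp)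
      calc (2 : ℝ[X]).degree + (X : ℝ[X]).degree + (U ℝ ((k:ℤ)+1)).degree
          ≤ 0 + 1 + ((k+1 : ℕ) : WithBot ℕ) := by
            refine add_le_add (add_le_add h2' degree_X_le) ?_
            exact_mod_cast h2
        _ ≤ ((k+2 : ℕ) : WithBot ℕ) := by
            push_cast
            rw [zero_add]
            norm_cast
            omega
    · exact le_trans h1 (by norm_cast; omega)

lemma symT (n : ℤ) (t : ℝ) : (T ℝ n).eval (-t) = (-1 : ℝ) ^ n * (T ℝ n).eval t := by
  induction n using Polynomial.Chebyshev.induct generalizing t with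
  | zero => simp
  | one => simp
  | add_two n ih1 ih2 =>
    have e1 : ((-1 : ℝ)) ^ ((n : ℤ) + 1) = -(-1 : ℝ) ^ (n : ℤ) := by
      rw [zpow_add_one₀ (by norm_num)]; ring
    have e2 : ((-1 : ℝ)) ^ ((n : ℤ) + 2) = (-1 : ℝ) ^ (n : ℤ) := by
      rw [zpow_add₀ (by norm_num : (-1:ℝ) ≠ 0)]; norm_num
    rw [T_add_two]
    simp only [eval_sub, eval_mul, eval_X, eval_ofNat, ih1, ih2, e1, e2]
    ring
  | neg_add_one n ih1 ih2 =>
    have e1 : ((-1 : ℝ)) ^ (-(n : ℤ) - 1) = -(-1 : ℝ) ^ (-(n : ℤ)) := by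
      rw [zpow_sub_one₀ (by norm_num : (-1:ℝ) ≠ 0)]
      norm_num
    have e2 : ((-1 : ℝ)) ^ (-(n : ℤ) + 1) = -(-1 : ℝ) ^ (-(n : ℤ)) := by
      rw [zpow_add₀ (by norm_num : (-1:ℝ) ≠ 0)]; norm_num
    rw [T_sub_one]
    simp only [eval_sub, eval_mul, eval_X, eval_ofNat, ih1, ih2, e1, e2]
    ring

lemma symU (n : ℤ) (t : ℝ) : (U ℝ n).eval (-t) = (-1 : ℝ) ^ n * (U ℝ n).eval t := by
  induction n using Polynomial.Chebyshev.induct generalizing t with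
  | zero => simp
  | one => simp
  | add_two n ih1 ih2 =>
    have e1 : ((-1 : ℝ)) ^ ((n : ℤ) + 1) = -(-1 : ℝ) ^ (n : ℤ) := by
      rw [zpow_add_one₀ (by norm_num)]; ring
    have e2 : ((-1 : ℝ)) ^ ((n : ℤ) + 2) = (-1 : ℝ) ^ (n : ℤ) := by
      rw [zpow_add₀ (by norm_num : (-1:ℝ) ≠ 0)]; norm_num
    rw [U_add_two]
    simp only [eval_sub, eval_mul, eval_X, eval_ofNat, ih1, ih2, e1, e2]
    ring
  | neg_add_one n ih1 ih2 =>
    have e1 : ((-1 : ℝ)) ^ (-(n : ℤ) - 1) = -(-1 : ℝ) ^ (-(n : ℤ)) := by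
      rw [zpow_sub_one₀ (by norm_num : (-1:ℝ) ≠ 0)]
      norm_num
    have e2 : ((-1 : ℝ)) ^ (-(n : ℤ) + 1) = -(-1 : ℝ) ^ (-(n : ℤ)) := by
      rw [zpow_add₀ (by norm_num : (-1:ℝ) ≠ 0)]; norm_num
    rw [U_sub_one]
    simp only [eval_sub, eval_mul, eval_X, eval_ofNat, ih1, ih2, e1, e2]
    ring

lemma zpow_formula (n : ℤ) (x : ℝ) (h1 : -1 ≤ x) (h2 : x ≤ 1) :
    ((x : ℂ) + Complex.I * (Real.sqrt (1 - x ^ 2) : ℝ)) ^ n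
      = (((T ℝ n).eval x : ℝ) : ℂ)
        + (((Real.sqrt (1 - x ^ 2) * (U ℝ (n - 1)).eval x : ℝ)) : ℂ) * Complex.I := by
  set θ := Real.arccos x with hθ
  have hc : Real.cos θ = x := Real.cos_arccos h1 h2
  have hs : Real.sin θ = Real.sqrt (1 - x ^ 2) := Real.sin_arccos x
  have hz : ((x : ℂ) + Complex.I * (Real.sqrt (1 - x ^ 2) : ℝ)) = Complex.exp (θ * Complex.I) := by
    rw [Complex.exp_mul_I,
      show Complex.cos (θ : ℂ) = ((Real.cos θ : ℝ) : ℂ) from (Complex.ofReal_cos θ).symm,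
      show Complex.sin (θ : ℂ) = ((Real.sin θ : ℝ) : ℂ) from (Complex.ofReal_sin θ).symm,
      hc, hs]
    ring
  rw [hz, ← Complex.exp_int_mul]
  have : ((n : ℂ)) * ((θ : ℂ) * Complex.I) = ((n * θ : ℝ) : ℂ) * Complex.I := by
    push_cast; ring
  rw [this, Complex.exp_mul_I, ← Complex.ofReal_cos, ← Complex.ofReal_sin]
  have hT : Real.cos ((n : ℝ) * θ) = (T ℝ n).eval x := by rw [← hc]; exact (T_real_cos θ n).symm
  have hU : Real.sin ((n : ℝ) * θ) = Real.sqrt (1 - x ^ 2) * (U ℝ (n - 1)).eval x := by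
    have := U_real_cos θ (n - 1)
    rw [hc] at this
    push_cast at this
    rw [show ((n : ℝ) - 1 + 1) = (n : ℝ) by ring] at this
    rw [← this, ← hs]; ring
  rw [hT, hU]
/-- If `W_m ∈ Ω_m` of exact degree `m` is orthogonal to all of `Ω_{m-1}`
with respect to `ψ`, then `∫ (x + i√(1-x²))^{-m+1+2s} W_m dψ = 0` for `s = 0, …, m-1`. -/
theorem stmt_12 (ψ : Measure ℝ) [IsFiniteMeasure ψ]
    (W : ℕ → ℝ → ℝ) (A0 A1 : ℕ → Polynomial ℝ)
    (hA0deg : ∀ k, (A0 k).degree ≤ (k : ℕ)) (hA1deg : ∀ k, (A1 k).degree < (k : ℕ))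
    (hA0sym : ∀ k, ∀ t : ℝ, (A0 k).eval (-t) = (-1 : ℝ) ^ k * (A0 k).eval t)
    (hA1sym : ∀ k, ∀ t : ℝ, (A1 k).eval (-t) = (-1 : ℝ) ^ (k + 1) * (A1 k).eval t)
    (hdecomp : ∀ k, ∀ x ∈ Set.Icc (-1 : ℝ) 1,
      W k x = (A0 k).eval x + Real.sqrt (1 - x ^ 2) * (A1 k).eval x)
    (hexact : ∀ k, (A0 k).coeff k ^ 2 + (A1 k).coeff (k - 1) ^ 2 > 0)
    (horth : ∀ m : ℕ, 1 ≤ m → ∀ B0 B1 : Polynomial ℝ,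
      B0.degree ≤ ((m - 1 : ℕ) : ℕ) → B1.degree < ((m - 1 : ℕ) : ℕ) →
      (∀ t : ℝ, B0.eval (-t) = (-1 : ℝ) ^ (m - 1) * B0.eval t) →
      (∀ t : ℝ, B1.eval (-t) = (-1 : ℝ) ^ m * B1.eval t) →
      ∫ x in Set.Icc (-1 : ℝ) 1,
        (B0.eval x + Real.sqrt (1 - x ^ 2) * B1.eval x) * W m x ∂ψ = 0) :
    ∀ m : ℕ, 1 ≤ m → ∀ s : ℕ, s ≤ m - 1 →
      ∫ x in Set.Icc (-1 : ℝ) 1,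
        ((x : ℂ) + Complex.I * (Real.sqrt (1 - x ^ 2) : ℝ)) ^ (-(m : ℤ) + 1 + 2 * s) *
          (W m x : ℂ) ∂ψ = 0 := by
  intro m hm s hs
  set n : ℤ := -(m : ℤ) + 1 + 2 * s with hn
  have hne : (-1 : ℝ) ≠ 0 := by norm_num
  set P : ℝ[X] := T ℝ n with hP
  set Q : ℝ[X] := U ℝ (n - 1) with hQ
  have hnabs : n.natAbs ≤ m - 1 := by omega
  -- degree of P
  have hPP : P = T ℝ (n.natAbs : ℤ) := by
    rcases Int.natAbs_eq n with h | h
    · exact congrArg (T ℝ) h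
    · rw [hP, show ((n.natAbs : ℤ)) = -n from by omega, T_neg]
  have hPdeg : P.degree ≤ ((m - 1 : ℕ) : ℕ) := by
    rw [hPP]
    exact le_trans (degT n.natAbs) (by norm_cast)
  -- degree of Q
  have hQdeg : Q.degree < ((m - 1 : ℕ) : ℕ) := by
    rcases le_or_gt 1 n with hge | hlt
    · have h1 : n - 1 = ((n - 1).toNat : ℤ) := by omega
      have h2 : (n - 1).toNat < m - 1 := by omega
      calc Q.degree ≤ (((n - 1).toNat : ℕ) : WithBot ℕ) := by
            rw [hQ, h1]; exact degU _
        _ < (((m - 1 : ℕ) : ℕ) : WithBot ℕ) := by exact_mod_cast h2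
    · have hU' : Q = -U ℝ (-n - 1) := by
        calc Q = U ℝ (-(-n) - 1) := by rw [hQ, neg_neg]
          _ = -U ℝ (-n - 1) := U_neg_sub_one ℝ (-n)
      by_cases h0 : n = 0
      · rw [hU', show -n - 1 = -1 from by omega, U_neg_one, neg_zero, degree_zero]
        exact_mod_cast WithBot.bot_lt_coe _
      · have h1 : -n - 1 = ((-n - 1).toNat : ℤ) := by omega
        have h2 : (-n - 1).toNat < m - 1 := by omega
        calc Q.degree = (U ℝ (-n - 1)).degree := by rw [hU', degree_neg]
          _ ≤ (((-n - 1).toNat : ℕ) : WithBot ℕ) := by rw [h1]; exact degU _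
          _ < (((m - 1 : ℕ) : ℕ) : WithBot ℕ) := by exact_mod_cast h2
  -- parity
  have hpowP : ((-1 : ℝ)) ^ n = (-1 : ℝ) ^ (m - 1) := by
    have hn2 : n = 2 * (s : ℤ) - ((m - 1 : ℕ) : ℤ) := by push_cast; omega
    rw [hn2, zpow_sub₀ hne, zpow_mul, zpow_natCast]
    norm_num
    rcases neg_one_pow_eq_or ℝ (m - 1) with h | h <;> rw [h] <;> norm_num
  have hpowQ : ((-1 : ℝ)) ^ (n - 1) = (-1 : ℝ) ^ m := by
    have hn2 : n - 1 = 2 * (s : ℤ) - ((m : ℕ) : ℤ) := by push_cast; omega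
    rw [hn2, zpow_sub₀ hne, zpow_mul, zpow_natCast]
    norm_num
    rcases neg_one_pow_eq_or ℝ m with h | h <;> rw [h] <;> norm_num
  have hPsym : ∀ t : ℝ, P.eval (-t) = (-1 : ℝ) ^ (m - 1) * P.eval t := fun t => by
    rw [← hpowP]; exact symT n t
  have hQsym : ∀ t : ℝ, Q.eval (-t) = (-1 : ℝ) ^ m * Q.eval t := fun t => by
    rw [← hpowQ]; exact symU (n - 1) t
  -- orthogonality
  have h0 : ∫ x in Set.Icc (-1 : ℝ) 1,
      (P.eval x + Real.sqrt (1 - x ^ 2) * (0 : ℝ[X]).eval x) * W m x ∂ψ = 0 :=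
    horth m hm P 0 hPdeg
      (by rw [degree_zero]; exact_mod_cast WithBot.bot_lt_coe _) hPsym (fun t => by simp)
  have h1 : ∫ x in Set.Icc (-1 : ℝ) 1,
      ((0 : ℝ[X]).eval x + Real.sqrt (1 - x ^ 2) * Q.eval x) * W m x ∂ψ = 0 :=
    horth m hm 0 Q (by rw [degree_zero]; exact bot_le) hQdeg (fun t => by simp) hQsym
  -- rewrite the integrand
  set G : ℝ → ℂ := fun x =>
    (((P.eval x + Real.sqrt (1 - x ^ 2) * (0 : ℝ[X]).eval x) * W m x : ℝ) : ℂ)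
      + ((((0 : ℝ[X]).eval x + Real.sqrt (1 - x ^ 2) * Q.eval x) * W m x : ℝ) : ℂ) * Complex.I
    with hG
  have hEq : Set.EqOn
      (fun x : ℝ => ((x : ℂ) + Complex.I * (Real.sqrt (1 - x ^ 2) : ℝ)) ^ n * (W m x : ℂ))
      G (Set.Icc (-1 : ℝ) 1) := by
    intro x hx
    simp only [hG]
    rw [zpow_formula n x hx.1 hx.2]
    simp only [eval_zero, mul_zero, add_zero, zero_add, Complex.ofReal_mul, Complex.ofReal_add]
    ring
  rw [MeasureTheory.setIntegral_congr_fun measurableSet_Icc hEq]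
  by_cases hInt : IntegrableOn G (Set.Icc (-1 : ℝ) 1) ψ
  · have key := setIntegral_re_add_im (𝕜 := ℂ) hInt
    have hre : ∀ x : ℝ, (G x).re
        = (P.eval x + Real.sqrt (1 - x ^ 2) * (0 : ℝ[X]).eval x) * W m x := fun x => by
      simp [hG]
    have him : ∀ x : ℝ, (G x).im
        = ((0 : ℝ[X]).eval x + Real.sqrt (1 - x ^ 2) * Q.eval x) * W m x := fun x => by
      simp [hG]
    simp only [RCLike.re_to_complex, RCLike.im_to_complex, RCLike.I_to_complex,
      hre, him] at key
    rw [← key, h0, h1]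
    simp
  · exact integral_undef hInt
end

section
/- Let K_{2m+1} be a self-inversive polynomial of degree 2m+1 whose constant coefficient k_0 is nonzero. Then for every self-inversive polynomial P of degree at most 4m+1 (degree 4m in the even case), there exist a self-inversive polynomial Q of degree at most 2m-1 and a self-inversive polynomial R of degree at most 2m such that P(z) = Q(z) K_{2m+1}(z) + z^m R(z). -/
open Polynomial Complex

/-- A polynomial is self-inversive of degree `n` (conjugate reciprocal): its coefficients
satisfy `p_j = conj (p_{n-j})` for all `j ≤ n`. -/
def SelfInversive (n : ℕ) (P : Polynomial ℂ) : Prop :=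
  P.degree ≤ (n : ℕ) ∧ ∀ j, j ≤ n → P.coeff j = (starRingEnd ℂ) (P.coeff (n - j))

/-!
Proof idea. Since `K(0) ≠ 0`, `K` is invertible modulo `z^m`, so some `A` of degree `< m`
satisfies `P ≡ A K (mod z^m)`. Symmetrising, `Q := A + z^(2m-1) conj(A(1/conj z))` is
self-inversive of degree `2m-1` and still `Q ≡ A (mod z^m)`. Then `S := P - Q K` is
self-inversive of degree `4m` and vanishes to order `m` at `0`; by symmetry its coefficients
above `3m` vanish too, so `S = z^m R` with `R` self-inversive of degree `2m`.
-/

namespace Polynomial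

theorem X_pow_dvd_reflect_of_degree_lt {R : Type*} [Semiring R] {f : R[X]} {k : ℕ}
    (hf : f.degree < k) (n : ℕ) : X ^ (n + 1 - k) ∣ reflect n f := by
  refine X_pow_dvd_iff.2 fun j hj => ?_
  rw [coeff_reflect, revAt_le (by omega)]
  exact coeff_eq_zero_of_degree_lt (hf.trans_le (by exact_mod_cast (by omega : k ≤ n - j)))

theorem exists_degree_lt_X_pow_dvd_sub_mul {F : Type*} [Field F] (P : F[X]) {K : F[X]}
    (hK : K.coeff 0 ≠ 0) (m : ℕ) : ∃ A : F[X], A.degree < m ∧ X ^ m ∣ P - A * K := by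
  obtain ⟨u, v, huv⟩ : IsCoprime (X ^ m) K :=
    (irreducible_X.coprime_iff_not_dvd.2 (by rwa [X_dvd_iff])).pow_left
  refine ⟨(P * v) %ₘ X ^ m, by simpa using degree_modByMonic_lt (P * v) (monic_X_pow m), ?_⟩
  rw [show P - (P * v) %ₘ X ^ m * K = X ^ m * (P * u) - ((P * v) %ₘ X ^ m - P * v) * K by
    linear_combination P * huv.symm]
  exact dvd_sub (dvd_mul_right _ _) ((dvd_modByMonic_sub _ _).mul_right K)

end Polynomial

theorem selfInversive_iff_map_eq_reflect {n : ℕ} {P : ℂ[X]} :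
    SelfInversive n P ↔ P.degree ≤ n ∧ P.map (starRingEnd ℂ) = reflect n P := by
  refine and_congr_right fun hdeg => ⟨fun h => ?_, fun h j hj => ?_⟩
  · ext j
    rw [coeff_map, coeff_reflect]
    rcases le_or_gt j n with hj | hj
    · rw [revAt_le hj, h j hj, conj_conj]
    · rw [revAt_eq_self_of_lt hj,
        coeff_eq_zero_of_degree_lt (hdeg.trans_lt (by exact_mod_cast hj)), map_zero]
  · have := congrArg (coeff · j) h
    simp only [coeff_map, coeff_reflect, revAt_le hj] at this
    rw [← this, conj_conj]

namespace SelfInversive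

theorem mul {a b : ℕ} {f g : ℂ[X]} (hf : SelfInversive a f) (hg : SelfInversive b g) :
    SelfInversive (a + b) (f * g) := by
  rw [selfInversive_iff_map_eq_reflect] at hf hg ⊢
  refine ⟨(degree_mul_le f g).trans (by exact_mod_cast add_le_add hf.1 hg.1), ?_⟩
  rw [Polynomial.map_mul, hf.2, hg.2, ← reflect_mul f g (natDegree_le_iff_degree_le.2 hf.1)
    (natDegree_le_iff_degree_le.2 hg.1)]

theorem sub {n : ℕ} {f g : ℂ[X]} (hf : SelfInversive n f) (hg : SelfInversive n g) :
    SelfInversive n (f - g) :=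
  ⟨(degree_sub_le f g).trans (max_le hf.1 hg.1), fun j hj => by
    rw [coeff_sub, coeff_sub, hf.2 j hj, hg.2 j hj, map_sub]⟩

theorem of_X_pow_mul {n k : ℕ} {R : ℂ[X]} (h : SelfInversive (n + 2 * k) (X ^ k * R)) :
    SelfInversive n R := by
  have hlow : ∀ j < k, (X ^ k * R).coeff j = 0 := X_pow_dvd_iff.1 (dvd_mul_right _ _)
  have hsym : ∀ j ≤ n, R.coeff j = starRingEnd ℂ (R.coeff (n - j)) := fun j hj => by
    rw [← coeff_X_pow_mul R k j, h.2 _ (by omega), ← coeff_X_pow_mul R k (n - j)]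
    congr 2
    omega
  refine ⟨degree_le_iff_coeff_zero _ _ |>.2 fun j hj => ?_, hsym⟩
  have hj : n < j := by exact_mod_cast hj
  rw [← coeff_X_pow_mul R k j]
  rcases le_or_gt (j + k) (n + 2 * k) with hle | hgt
  · rw [h.2 _ hle, hlow _ (by omega), map_zero]
  · exact coeff_eq_zero_of_degree_lt (h.1.trans_lt (by exact_mod_cast hgt))

end SelfInversive

theorem selfInversive_add_reflect_map {n : ℕ} {A : ℂ[X]} (hA : A.natDegree ≤ n) :
    SelfInversive n (A + reflect n (A.map (starRingEnd ℂ))) := by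
  rw [selfInversive_iff_map_eq_reflect]
  refine ⟨?_, ?_⟩
  · refine (degree_add_le _ _).trans (max_le (degree_le_of_natDegree_le hA) ?_)
    exact degree_le_of_natDegree_le natDegree_reflect_le |>.trans (by simp [hA])
  · rw [Polynomial.map_add, ← reflect_map, Polynomial.map_map, RingHomCompTriple.comp_eq,
      Polynomial.map_id, reflect_add, reflect_reflect, add_comm]

/-- If `K_{2m+1}` is self-inversive of degree `2m+1` with nonzero constant
coefficient, then every self-inversive polynomial `P` of degree at most `4m` can be
written `P = Q·K_{2m+1} + z^m·R` with `Q` self-inversive of degree `2m-1` and `R`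
self-inversive of degree `2m`. -/
theorem stmt_15 (m : ℕ) (K : Polynomial ℂ)
    (hK : SelfInversive (2 * m + 1) K) (hk0 : K.coeff 0 ≠ 0)
    (P : Polynomial ℂ) (hP : SelfInversive (4 * m) P) :
    ∃ Q R : Polynomial ℂ,
      Q.degree < (2 * m : ℕ) ∧ (∀ j, j ≤ 2 * m - 1 → Q.coeff j = (starRingEnd ℂ) (Q.coeff (2 * m - 1 - j))) ∧
      SelfInversive (2 * m) R ∧
      P = Q * K + Polynomial.X ^ m * R := by
  obtain rfl | hm := m.eq_zero_or_pos
  · exact ⟨0, P, by simp, by simp, by simpa using hP, by simp⟩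
  obtain ⟨A, hAdeg, hPAK⟩ := exists_degree_lt_X_pow_dvd_sub_mul P hk0 m
  set Q := A + reflect (2 * m - 1) (A.map (starRingEnd ℂ))
  have hQ : SelfInversive (2 * m - 1) Q :=
    selfInversive_add_reflect_map <| natDegree_le_iff_degree_le.2 <|
      hAdeg.le.trans (by exact_mod_cast (by omega : m ≤ 2 * m - 1))
  have hQA : X ^ m ∣ Q - A := by
    have := X_pow_dvd_reflect_of_degree_lt (f := A.map (starRingEnd ℂ))
      (by rwa [degree_map]) (2 * m - 1)
    rwa [show 2 * m - 1 + 1 - m = m by omega, ← add_sub_cancel_left A (reflect _ _)] at this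
  obtain ⟨R, hR⟩ : X ^ m ∣ P - Q * K := by
    rw [show P - Q * K = (P - A * K) - (Q - A) * K by ring]
    exact dvd_sub hPAK (hQA.mul_right K)
  have hS : SelfInversive (4 * m) (P - Q * K) :=
    hP.sub (show 2 * m - 1 + (2 * m + 1) = 4 * m by omega ▸ hQ.mul hK)
  refine ⟨Q, R, hQ.1.trans_lt (by exact_mod_cast (by omega : 2 * m - 1 < 2 * m)), hQ.2, ?_,
    by rw [← hR]; ring⟩
  exact .of_X_pow_mul (k := m) (by rwa [hR, show 4 * m = 2 * m + 2 * m by omega] at hS)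
end

section
/- Let {α̂_m}_{m≥2} be a positive chain sequence with maximal parameter sequence {M_m}_{m≥1}, so α̂_{m+1} = (1 - M_m) M_{m+1} for m ≥ 1. Fix 0 ≤ t < 1 and define α̃_1 = (1-t) M_1 and α̃_{m+1} = α̂_{m+1} for m ≥ 1. Then {α̃_m}_{m≥1} is a positive chain sequence whose maximal parameter sequence is {M_m}_{m≥0} with M_0 = t. -/
/-- Let `{α̂_m}_{m≥2}` be a positive chain sequence with maximal parameter
sequence `{M_m}_{m≥1}`, so `α̂_{m+1} = (1-M_m) M_{m+1}` for `m ≥ 1`. For `0 ≤ t < 1`, define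
`α̃_1 = (1-t) M_1` and `α̃_{m+1} = α̂_{m+1}` for `m ≥ 1`. Then `{α̃_m}_{m≥1}` is a positive
chain sequence whose maximal parameter sequence is `{M_m}_{m≥0}` with `M_0 = t`. -/
theorem stmt_19 (αhat : ℕ → ℝ) (M : ℕ → ℝ)
    (hMparam : ∀ m : ℕ, 1 ≤ m → αhat (m + 1) = (1 - M m) * M (m + 1))
    (hMpos : ∀ m : ℕ, 1 ≤ m → 0 < M m ∧ M m < 1)
    (hMmax : ∀ g : ℕ → ℝ, (0 ≤ g 1 ∧ g 1 < 1) → (∀ m : ℕ, 2 ≤ m → 0 < g m ∧ g m < 1) →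
      (∀ m : ℕ, 1 ≤ m → αhat (m + 1) = (1 - g m) * g (m + 1)) →
      ∀ m : ℕ, 1 ≤ m → g m ≤ M m)
    (t : ℝ) (ht0 : 0 ≤ t) (ht1 : t < 1)
    (αtilde : ℕ → ℝ)
    (hα1 : αtilde 1 = (1 - t) * M 1)
    (hαrest : ∀ m : ℕ, 1 ≤ m → αtilde (m + 1) = αhat (m + 1))
    (M' : ℕ → ℝ) (hM' : M' 0 = t ∧ ∀ m : ℕ, 1 ≤ m → M' m = M m) :
    ((0 ≤ M' 0 ∧ M' 0 < 1) ∧ (∀ m : ℕ, 1 ≤ m → 0 < M' m ∧ M' m < 1) ∧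
      (∀ m : ℕ, 1 ≤ m → αtilde m = (1 - M' (m - 1)) * M' m)) ∧
    (∀ g : ℕ → ℝ, (0 ≤ g 0 ∧ g 0 < 1) → (∀ m : ℕ, 1 ≤ m → 0 < g m ∧ g m < 1) →
      (∀ m : ℕ, 1 ≤ m → αtilde m = (1 - g (m - 1)) * g m) →
      ∀ m : ℕ, g m ≤ M' m) := by
  obtain ⟨hM'0, hM'succ⟩ := hM'
  have hM1pos := hMpos 1 le_rfl
  constructor
  · refine ⟨⟨by rw [hM'0]; exact ht0, by rw [hM'0]; exact ht1⟩, ?_, ?_⟩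
    · intro m hm; rw [hM'succ m hm]; exact hMpos m hm
    · intro m hm
      rcases Nat.exists_eq_add_of_le hm with ⟨k, rfl⟩
      cases k with
      | zero =>
        show αtilde 1 = (1 - M' 0) * M' 1
        rw [hα1, hM'0, hM'succ 1 le_rfl]
      | succ k =>
        have h1 : 1 ≤ k + 1 := Nat.le_add_left 1 k
        rw [show 1 + (k+1) = (k+1) + 1 by ring, hαrest (k+1) h1,
          hMparam (k+1) h1, hM'succ (k+1+1) (by omega)]
        have h2 : (k+1+1) - 1 = k+1 := rfl
        rw [h2, hM'succ (k+1) h1]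
  · intro g hg0 hgpos hgchain
    have hg1 := hgpos 1 le_rfl
    have hchain' : ∀ m : ℕ, 1 ≤ m → αhat (m + 1) = (1 - g m) * g (m + 1) := by
      intro m hm
      rw [← hαrest m hm]
      simpa using hgchain (m+1) (by omega)
    have hle : ∀ m : ℕ, 1 ≤ m → g m ≤ M m :=
      hMmax g ⟨hg1.1.le, hg1.2⟩ (fun m hm => hgpos m (by omega)) hchain'
    intro m
    cases m with
    | zero =>
      rw [hM'0]
      have h1 := hgchain 1 le_rfl
      have heq : (1 - g 0) * g 1 = (1 - t) * M 1 := by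
        have : (1:ℕ) - 1 = 0 := rfl
        rw [this] at h1
        rw [← h1, hα1]
      have hgle : g 1 ≤ M 1 := hle 1 le_rfl
      nlinarith [hg1.1, hM1pos.1, hg0.2, hg1.2]
    | succ m =>
      rw [hM'succ (m+1) (by omega)]
      exact hle (m+1) (by omega)
end
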